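/- arXiv:2202.02551 — 5 statements merged into one kernel-verified Lean document; each statement's English description precedes it below -/
import Mathlib

section
/- Let n ≥ 3, let M ∈ ℂ, and let P : ZMod n → ℂ be an n-gon such that each triple (M, P i, P (i+1)) is non-collinear; let P' = 𝒞_M(P). Then for every index i such that P' (i−1) ≠ P' i, the reflection of M across the line through P' (i−1) and P' i equals P i. (In other words, the inverse of the circumcenter map is the M-reflection construction.) -/
/-!
Both `cmap M P (i - 1)` and `cmap M P i` are circumcenters of triangles having `M` and `P i` as
vertices, so they lie on the perpendicular bisector of `M` and `P i`. In the plane two distinct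
points of that bisector span it, and reflection in the perpendicular bisector of two points
swaps them.
-/

open scoped Classical

/-- Circumcenter of three points of `ℂ` (junk value `0` if the points are collinear).
When the points are affinely independent this is the unique point equidistant from all three. -/
noncomputable def ccenter (A B C : ℂ) : ℂ :=
  if h : AffineIndependent ℝ ![A, B, C] then
    (⟨![A, B, C], h⟩ : Affine.Simplex ℝ ℂ 2).circumcenter
  else 0

/-- The circumcenter map `𝒞_M`: the `i`-th vertex of the image polygon is the
circumcenter of `M`, `P i`, `P (i+1)`. -/
noncomputable def cmap {n : ℕ} (M : ℂ) (P : ZMod n → ℂ) : ZMod n → ℂ :=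
  fun i => ccenter M (P i) (P (i + 1))

open EuclideanGeometry AffineSubspace Module

namespace AffineSubspace

variable {V P : Type*} [NormedAddCommGroup V] [InnerProductSpace ℝ V] [MetricSpace P]
  [NormedAddTorsor V P]

instance nonempty_perpBisector (p₁ p₂ : P) : Nonempty (perpBisector p₁ p₂) :=
  ⟨⟨midpoint ℝ p₁ p₂, midpoint_mem_perpBisector p₁ p₂⟩⟩

theorem finrank_direction_perpBisector {n : ℕ} [Fact (finrank ℝ V = n + 1)] {p₁ p₂ : P}
    (h : p₁ ≠ p₂) : finrank ℝ (perpBisector p₁ p₂).direction = n := by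
  rw [direction_perpBisector]
  exact Submodule.finrank_orthogonal_span_singleton (vsub_ne_zero.2 h.symm)

theorem affineSpan_pair_eq_perpBisector [Fact (finrank ℝ V = 2)] {p₁ p₂ c₁ c₂ : P}
    (hp : p₁ ≠ p₂) (hc : c₁ ≠ c₂) (h₁ : c₁ ∈ perpBisector p₁ p₂) (h₂ : c₂ ∈ perpBisector p₁ p₂) :
    line[ℝ, c₁, c₂] = perpBisector p₁ p₂ := by
  have : Fact (finrank ℝ V = 1 + 1) := ⟨Fact.out⟩
  have : FiniteDimensional ℝ V := .of_fact_finrank_eq_succ 1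
  rw [← Matrix.range_cons_cons_empty]
  refine (affineIndependent_of_ne ℝ hc).affineSpan_eq_of_le_of_card_eq_finrank_add_one ?_ ?_
  · rw [Matrix.range_cons_cons_empty]
    exact affineSpan_pair_le_of_mem_of_mem h₁ h₂
  · simp [finrank_direction_perpBisector (n := 1) hp]

theorem reflection_perpBisector_left (p₁ p₂ : P)
    [(perpBisector p₁ p₂).direction.HasOrthogonalProjection] :
    reflection (perpBisector p₁ p₂) p₁ = p₂ := by
  have hv : p₁ -ᵥ midpoint ℝ p₁ p₂ ∈ (perpBisector p₁ p₂).directionᗮ := by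
    rw [direction_perpBisector, left_vsub_midpoint]
    refine Submodule.le_orthogonal_orthogonal _ (Submodule.mem_span_singleton.2 ⟨-⅟2, ?_⟩)
    rw [neg_smul, ← smul_neg, neg_vsub_eq_vsub_rev]
  have := reflection_orthogonal_vadd (midpoint_mem_perpBisector p₁ p₂) hv
  rwa [vsub_vadd, neg_vsub_eq_vsub_rev, ← Equiv.pointReflection_apply,
    Equiv.pointReflection_midpoint_left] at this

end AffineSubspace

theorem ccenter_mem_perpBisector {A B C : ℂ} (h : AffineIndependent ℝ ![A, B, C]) (i j : Fin 3) :
    ccenter A B C ∈ perpBisector (![A, B, C] i) (![A, B, C] j) := by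
  set S : Affine.Simplex ℝ ℂ 2 := ⟨![A, B, C], h⟩
  rw [ccenter, dif_pos h, mem_perpBisector_iff_dist_eq']
  exact (S.dist_circumcenter_eq_circumradius i).trans (S.dist_circumcenter_eq_circumradius j).symm

theorem circumcenter_map_inverse_is_reflection_general
    (n : ℕ) (M : ℂ) (P : ZMod n → ℂ)
    (hnc : ∀ i : ZMod n, AffineIndependent ℝ ![M, P i, P (i + 1)]) :
    ∀ i : ZMod n, cmap M P (i - 1) ≠ cmap M P i →
      EuclideanGeometry.reflection (affineSpan ℝ {cmap M P (i - 1), cmap M P i}) M = P i := by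
  intro i hne
  have hMP : M ≠ P i := (hnc i).injective.ne (show (0 : Fin 3) ≠ 1 by decide)
  have h₁ : cmap M P (i - 1) ∈ perpBisector M (P i) := by
    simpa [cmap] using ccenter_mem_perpBisector (hnc (i - 1)) 0 2
  have h₂ : cmap M P i ∈ perpBisector M (P i) := ccenter_mem_perpBisector (hnc i) 0 1
  have := Complex.finrank_real_complex_fact
  rw [eq_reflection_of_eq_subspace (affineSpan_pair_eq_perpBisector hMP hne h₁ h₂),
    reflection_perpBisector_left]

/-- The inverse of the circumcenter map is the `M`-reflection construction:
reflecting `M` across the line through `𝒞_M(P) (i-1)` and `𝒞_M(P) i` gives back `P i`. -/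
theorem circumcenter_map_inverse_is_reflection
    (n : ℕ) (hn : 3 ≤ n) (M : ℂ) (P : ZMod n → ℂ)
    (hnc : ∀ i : ZMod n, AffineIndependent ℝ ![M, P i, P (i + 1)]) :
    ∀ i : ZMod n, cmap M P (i - 1) ≠ cmap M P i →
      EuclideanGeometry.reflection (affineSpan ℝ {cmap M P (i - 1), cmap M P i}) M = P i :=
  circumcenter_map_inverse_is_reflection_general n M P hnc
end

section
/- Let n ≥ 3, let M ∈ ℂ, and let P : ZMod n → ℂ be an n-gon such that each triple (M, P i, P (i+1)) is non-collinear; let P' = 𝒞_M(P). Then for every index i such that P' (i−1) ≠ P' i, the orthogonal projection of M onto the line through P' (i−1) and P' i equals the midpoint (M + P i)/2. (In other words, the M-pedal polygon of 𝒞_M(P) is the image of P under the homothety with center M and ratio 1/2.) -/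
open scoped Classical

lemma ccenter_dist (A B C : ℂ) (h : AffineIndependent ℝ ![A, B, C]) (j : Fin 3) :
    dist (![A, B, C] j) (ccenter A B C) = dist A (ccenter A B C) := by
  rw [ccenter, dif_pos h]
  have hj := Affine.Simplex.dist_circumcenter_eq_circumradius (⟨![A,B,C],h⟩ : Affine.Simplex ℝ ℂ 2) j
  have h0 := Affine.Simplex.dist_circumcenter_eq_circumradius (⟨![A,B,C],h⟩ : Affine.Simplex ℝ ℂ 2) 0
  rw [hj]
  simpa using h0.symm

/-- The `M`-pedal polygon of `𝒞_M(P)` is the image of `P` under the homothety with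
center `M` and ratio `1/2`: the orthogonal projection of `M` onto the line through
`𝒞_M(P) (i-1)` and `𝒞_M(P) i` is the midpoint `(M + P i)/2`. -/
theorem pedal_of_circumcenter_map_is_half_homothety
    (n : ℕ) (hn : 3 ≤ n) (M : ℂ) (P : ZMod n → ℂ)
    (hnc : ∀ i : ZMod n, AffineIndependent ℝ ![M, P i, P (i + 1)]) :
    ∀ i : ZMod n, cmap M P (i - 1) ≠ cmap M P i →
      (EuclideanGeometry.orthogonalProjection
          (affineSpan ℝ {cmap M P (i - 1), cmap M P i}) M : ℂ) = (M + P i) / 2 := by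
  intro i hne
  have hi : (i - 1) + 1 = i := sub_add_cancel i 1
  set Q1 := cmap M P (i - 1) with hQ1def
  set Q2 := cmap M P i with hQ2def
  -- both circumcenters are equidistant from M and P i
  have h1 : dist Q1 M = dist Q1 (P i) := by
    have h := hnc (i - 1)
    rw [hi] at h
    have hd := ccenter_dist M (P (i - 1)) (P i) h 2
    simp only [Matrix.cons_val_two, Matrix.tail_cons, Matrix.head_cons] at hd
    simp only [hQ1def, cmap, hi]
    rw [dist_comm _ M, dist_comm _ (P i)]
    exact hd.symm
  have h2 : dist Q2 M = dist Q2 (P i) := by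
    have h := hnc i
    have hd := ccenter_dist M (P i) (P (i + 1)) h 1
    simp only [Matrix.cons_val_one, Matrix.head_cons] at hd
    simp only [hQ2def, cmap]
    rw [dist_comm _ M, dist_comm _ (P i)]
    exact hd.symm
  have hMne : M ≠ P i := by
    have := (hnc i).injective.ne (show (0 : Fin 3) ≠ 1 by decide)
    simpa using this
  set B := AffineSubspace.perpBisector M (P i) with hBdef
  have hQ1B : Q1 ∈ B := AffineSubspace.mem_perpBisector_iff_dist_eq.2 h1
  have hQ2B : Q2 ∈ B := AffineSubspace.mem_perpBisector_iff_dist_eq.2 h2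
  have hle : affineSpan ℝ {Q1, Q2} ≤ B := by
    rw [affineSpan_le]
    rintro x (rfl | rfl) <;> assumption
  have hvne : P i -ᵥ M ≠ 0 := by
    simpa [vsub_eq_sub, sub_ne_zero] using hMne.symm
  have hfB : Module.finrank ℝ B.direction = 1 := by
    rw [hBdef, AffineSubspace.direction_perpBisector]
    have hsum := Submodule.finrank_add_finrank_orthogonal (K := ℝ ∙ (P i -ᵥ M))
    have hs1 : Module.finrank ℝ (ℝ ∙ (P i -ᵥ M)) = 1 := finrank_span_singleton hvne
    have h2 : Module.finrank ℝ ℂ = 2 := Complex.finrank_real_complex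
    omega
  have hfS : Module.finrank ℝ (affineSpan ℝ {Q1, Q2}).direction = 1 := by
    rw [direction_affineSpan, vectorSpan_pair]
    exact finrank_span_singleton (by simpa [vsub_eq_sub, sub_ne_zero] using hne)
  have hdir : (affineSpan ℝ {Q1, Q2}).direction = B.direction :=
    Submodule.eq_of_le_of_finrank_eq (AffineSubspace.direction_le hle) (by rw [hfS, hfB])
  have hspan : affineSpan ℝ {Q1, Q2} = B :=
    AffineSubspace.eq_of_direction_eq_of_nonempty_of_le hdir
      ⟨Q1, subset_affineSpan ℝ _ (by simp)⟩ hle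
  haveI : Nonempty B := ⟨⟨_, AffineSubspace.midpoint_mem_perpBisector M (P i)⟩⟩
  rw [EuclideanGeometry.eq_orthogonalProjection_of_eq_subspace hspan]
  -- the projection onto the perpendicular bisector is the midpoint
  have hmid : (EuclideanGeometry.orthogonalProjection B M : ℂ) = midpoint ℝ M (P i) := by
    have hmem : midpoint ℝ M (P i) ∈ (B : Set ℂ) ∩ AffineSubspace.mk' M B.directionᗮ := by
      constructor
      · exact AffineSubspace.midpoint_mem_perpBisector M (P i)
      · rw [SetLike.mem_coe, AffineSubspace.mem_mk', hBdef,
          AffineSubspace.direction_perpBisector, Submodule.orthogonal_orthogonal]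
        exact Submodule.mem_span_singleton.2 ⟨⅟2, (midpoint_vsub_left (R := ℝ) M (P i)).symm⟩
    rw [EuclideanGeometry.inter_eq_singleton_orthogonalProjection M] at hmem
    exact (Set.mem_singleton_iff.1 hmem).symm
  rw [hmid]
  have : ((1:ℝ)/2) • (M + P i) = (M + P i) / 2 := by
    rw [Complex.real_smul]; push_cast; ring
  rw [midpoint_eq_smul_add, invOf_eq_inv, ← this]
  norm_num
end

section
/- Let n ≥ 3, M ∈ ℂ, and let P : ZMod n → ℂ be an n-gon such that the iterate 𝒞_M^n(P) is defined (all triples encountered at every stage are non-collinear). Then 𝒞_M^n(P) is the image of P under a direct similarity centered at M: there exists σ ∈ ℂ, σ ≠ 0, such that (𝒞_M^n(P)) i − M = σ*(P i − M) for all i. -/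
open scoped Classical

/-!
Put `M` at the origin. A point `z` is equidistant from `0` and `a` iff `re (z / a) = 1 / 2`, a
condition on `z / a` alone. Hence if `q` and `r` are both equidistant from `0` and `b`, the
circumcenter of `0, q, r` is `q * r / b`. Writing `w k i` for the `i`-th vertex of `𝒞_M^k(P)`
(relative to `M`), this gives `w (k + 2) i * w k (i + 1) = w (k + 1) i * w (k + 1) (i + 1)`, so
the ratio `w (k + 1) i / w k i` equals `w 1 (i + k) / w 0 (i + k)`. Telescoping over `k < n`,
`w n i / w 0 i` is the product of `w 1 j / w 0 j` over all `j`, independent of `i`.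
-/

open Finset ComplexConjugate

theorem prod_range_eq_prod_div_mul {K : Type*} [Field K] {f : ℕ → K} {m : ℕ}
    (hf : ∀ k < m, f k ≠ 0) : f m = (∏ k ∈ range m, f (k + 1) / f k) * f 0 := by
  induction m with
  | zero => simp
  | succ m ih =>
    rw [prod_range_succ, mul_right_comm, ← ih fun k hk => hf k (by omega),
      mul_div_cancel₀ _ (hf m (by omega))]

theorem ZMod.prod_range_add_natCast {M : Type*} [CommMonoid M] {n : ℕ} [NeZero n]
    (f : ZMod n → M) (i : ZMod n) : ∏ k ∈ range n, f (i + k) = ∏ j, f j := by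
  rw [← Fintype.prod_equiv (Equiv.addLeft i) (fun j => f (i + j)) f fun _ => rfl]
  exact prod_nbij' (↑) ZMod.val (fun _ _ => mem_univ _) (fun j _ => mem_range.2 (ZMod.val_lt j))
    (fun k hk => ZMod.val_cast_of_lt (mem_range.1 hk)) (fun j _ => ZMod.natCast_zmod_val j)
    (fun _ _ => rfl)

section MulRelation

variable {K : Type*} [Field K] {n : ℕ} {w : ℕ → ZMod n → K}

theorem div_eq_div_zero_of_mul_eq_mul (hw : ∀ k < n, ∀ i, w k i ≠ 0)
    (hrel : ∀ k, k + 2 ≤ n → ∀ i, w (k + 2) i * w k (i + 1) = w (k + 1) i * w (k + 1) (i + 1))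
    {k : ℕ} (hk : k < n) (i : ZMod n) :
    w (k + 1) i / w k i = w 1 (i + k) / w 0 (i + k) := by
  induction k generalizing i with
  | zero => simp
  | succ k ih =>
    have hshift : w (k + 2) i / w (k + 1) i = w (k + 1) (i + 1) / w k (i + 1) := by
      rw [div_eq_div_iff (hw _ hk i) (hw k (by omega) _), hrel k hk i, mul_comm]
    rw [hshift, ih (by omega), Nat.cast_succ, add_right_comm, add_assoc]

theorem eq_prod_div_mul_of_mul_eq_mul [NeZero n] (hw : ∀ k < n, ∀ i, w k i ≠ 0)
    (hrel : ∀ k, k + 2 ≤ n → ∀ i, w (k + 2) i * w k (i + 1) = w (k + 1) i * w (k + 1) (i + 1))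
    (i : ZMod n) : w n i = (∏ j, w 1 j / w 0 j) * w 0 i := by
  rw [prod_range_eq_prod_div_mul (f := (w · i)) fun k hk => hw k hk i,
    ← ZMod.prod_range_add_natCast _ i]
  congr 1
  exact prod_congr rfl fun k hk => div_eq_div_zero_of_mul_eq_mul hw hrel (mem_range.1 hk) i

end MulRelation

def OnPerpBisector (z a : ℂ) : Prop := z * conj a + conj z * a = a * conj a

theorem norm_eq_norm_sub_iff_onPerpBisector {z a : ℂ} : ‖z‖ = ‖z - a‖ ↔ OnPerpBisector z a := by
  rw [OnPerpBisector, ← sq_eq_sq₀ (norm_nonneg _) (norm_nonneg _), ← Complex.ofReal_inj]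
  push_cast
  rw [← Complex.mul_conj', ← Complex.mul_conj', map_sub]
  constructor <;> intro h <;> linear_combination h

theorem dist_eq_dist_iff_onPerpBisector {M A z : ℂ} :
    dist M z = dist A z ↔ OnPerpBisector (z - M) (A - M) := by
  rw [← norm_eq_norm_sub_iff_onPerpBisector, sub_sub_sub_cancel_right, dist_comm M, dist_comm A,
    Complex.dist_eq, Complex.dist_eq]

theorem eq_zero_of_onPerpBisector_zero {a : ℂ} (h : OnPerpBisector 0 a) : a = 0 := by
  simpa [OnPerpBisector] using h.symm

theorem OnPerpBisector.mul_div {b q r : ℂ} (hb : b ≠ 0) (hq : OnPerpBisector q b)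
    (hr : OnPerpBisector r b) : OnPerpBisector (q * r / b) q ∧ OnPerpBisector (q * r / b) r := by
  have hb' : conj b ≠ 0 := (map_ne_zero _).2 hb
  unfold OnPerpBisector at *
  simp only [map_div₀, map_mul]
  constructor <;> field_simp
  · linear_combination q * conj q * hr
  · linear_combination r * conj r * hq

theorem Complex.affineSpan_eq_top_of_affineIndependent_fin_three {p : Fin 3 → ℂ}
    (h : AffineIndependent ℝ p) : affineSpan ℝ (Set.range p) = ⊤ := by
  rw [h.affineSpan_eq_top_iff_card_eq_finrank_add_one, Complex.finrank_real_complex]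
  rfl

theorem eq_ccenter_iff {M A B z : ℂ} (h : AffineIndependent ℝ ![M, A, B]) :
    z = ccenter M A B ↔ dist M z = dist A z ∧ dist M z = dist B z := by
  set s : Affine.Simplex ℝ ℂ 2 := ⟨![M, A, B], h⟩
  rw [ccenter, dif_pos h]
  constructor
  · rintro rfl
    have hr := s.dist_circumcenter_eq_circumradius
    exact ⟨(hr 0).trans (hr 1).symm, (hr 0).trans (hr 2).symm⟩
  · rintro ⟨hA, hB⟩
    refine s.eq_circumcenter_of_dist_eq (r := dist M z) ?_ fun i => ?_
    · rw [Complex.affineSpan_eq_top_of_affineIndependent_fin_three h]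
      exact AffineSubspace.mem_top _ _ _
    · fin_cases i
      exacts [rfl, hA.symm, hB.symm]

theorem onPerpBisector_ccenter {M A B : ℂ} (h : AffineIndependent ℝ ![M, A, B]) :
    OnPerpBisector (ccenter M A B - M) (A - M) ∧ OnPerpBisector (ccenter M A B - M) (B - M) := by
  simpa only [dist_eq_dist_iff_onPerpBisector] using (eq_ccenter_iff h).1 rfl

theorem ccenter_ne_left {M A B : ℂ} (h : AffineIndependent ℝ ![M, A, B]) : ccenter M A B ≠ M := by
  intro hM
  have hA := (onPerpBisector_ccenter h).1
  rw [hM, sub_self] at hA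
  exact h.injective.ne (show (1 : Fin 3) ≠ 0 by decide)
    (sub_eq_zero.1 (eq_zero_of_onPerpBisector_zero hA))

theorem ccenter_ccenter_sub_mul {M A B C : ℂ} (hAB : AffineIndependent ℝ ![M, A, B])
    (hBC : AffineIndependent ℝ ![M, B, C])
    (h : AffineIndependent ℝ ![M, ccenter M A B, ccenter M B C]) :
    (ccenter M (ccenter M A B) (ccenter M B C) - M) * (B - M) =
      (ccenter M A B - M) * (ccenter M B C - M) := by
  have hb : B - M ≠ 0 :=
    sub_ne_zero.2 (hAB.injective.ne (show (2 : Fin 3) ≠ 0 by decide))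
  obtain ⟨hq, hr⟩ := OnPerpBisector.mul_div hb (onPerpBisector_ccenter hAB).2
    (onPerpBisector_ccenter hBC).1
  have hz := (eq_ccenter_iff (z := _ * _ / (B - M) + M) h).2 <| by
    simp only [dist_eq_dist_iff_onPerpBisector, add_sub_cancel_right]
    exact ⟨hq, hr⟩
  rw [← hz, add_sub_cancel_right, div_mul_cancel₀ _ hb]

theorem cmap_cmap_sub_mul {n : ℕ} {M : ℂ} {P : ZMod n → ℂ}
    (hP : ∀ i, AffineIndependent ℝ ![M, P i, P (i + 1)])
    (hQ : ∀ i, AffineIndependent ℝ ![M, cmap M P i, cmap M P (i + 1)]) (i : ZMod n) :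
    (cmap M (cmap M P) i - M) * (P (i + 1) - M) = (cmap M P i - M) * (cmap M P (i + 1) - M) :=
  ccenter_ccenter_sub_mul (hP i) (hP (i + 1)) (hQ i)

/-- `𝒞_M^n(P)` is the image of `P` under a direct similarity centered at `M`. -/
theorem circumcenter_map_pow_n_is_similarity
    (n : ℕ) (hn : 3 ≤ n) (M : ℂ) (P : ZMod n → ℂ)
    (hdef : ∀ k < n, ∀ i : ZMod n,
      AffineIndependent ℝ ![M, ((cmap M)^[k] P) i, ((cmap M)^[k] P) (i + 1)]) :
    ∃ σ : ℂ, σ ≠ 0 ∧ ∀ i : ZMod n, ((cmap M)^[n] P) i - M = σ * (P i - M) := by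
  obtain ⟨m, rfl⟩ : ∃ m, n = m + 1 := ⟨n - 1, by omega⟩
  set w : ℕ → ZMod (m + 1) → ℂ := fun k i => (cmap M)^[k] P i - M
  have hw : ∀ k < m + 1, ∀ i, w k i ≠ 0 := fun k hk i =>
    sub_ne_zero.2 ((hdef k hk i).injective.ne (show (1 : Fin 3) ≠ 0 by decide))
  have hrel : ∀ k, k + 2 ≤ m + 1 → ∀ i,
      w (k + 2) i * w k (i + 1) = w (k + 1) i * w (k + 1) (i + 1) := fun k hk i => by
    simp only [w, Function.iterate_succ_apply']
    refine cmap_cmap_sub_mul (hdef k (by omega)) ?_ i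
    simpa only [Function.iterate_succ_apply'] using hdef (k + 1) hk
  have hwn : w (m + 1) 0 ≠ 0 := by
    simp only [w, Function.iterate_succ_apply']
    exact sub_ne_zero.2 (ccenter_ne_left (hdef m (by omega) 0))
  have hσ := eq_prod_div_mul_of_mul_eq_mul hw hrel
  refine ⟨_, fun h0 => hwn ?_, hσ⟩
  rw [hσ, h0, zero_mul]
end

section
/- Let (A,B,C) be the equilateral triangle with A = 1, B = (−1 + √3·I)/2, C = (−1 − √3·I)/2 and let M = 1 − √3. Let (A₁,B₁,C₁) be the image of (A,B,C) under the circumcenter map with respect to M, and (A₂,B₂,C₂) the image of (A₁,B₁,C₁). Then A₁ = 1, B₁ = (1 − √3/2) + (3/2 − √3)·I, C₁ = (1 − √3/2) + (√3 − 3/2)·I, A₂ = √3 − 2, B₂ = (1 − √3/2) − (3/2)·I, C₂ = (1 − √3/2) + (3/2)·I. Moreover the triangle (A₁,B₁,C₁) has interior angle π/6 at A₁ and 5π/12 at each of B₁ and C₁, and (A₂,B₂,C₂) has interior angle 5π/6 at A₂ and π/12 at each of B₂ and C₂. -/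
open scoped Classical

/-- The circumcenter map on triangles: `(A,B,C)` is sent to
`(circumcenter(M,B,C), circumcenter(M,C,A), circumcenter(M,A,B))`. -/
noncomputable def tmap (M : ℂ) (T : ℂ × ℂ × ℂ) : ℂ × ℂ × ℂ :=
  (ccenter M T.2.1 T.2.2, ccenter M T.2.2 T.1, ccenter M T.1 T.2.1)

/-- The circumcenter map is defined at `(M, T)`: each of the triples
`(M,B,C)`, `(M,C,A)`, `(M,A,B)` is non-collinear. -/
def TDef (M : ℂ) (T : ℂ × ℂ × ℂ) : Prop :=
  AffineIndependent ℝ ![M, T.2.1, T.2.2] ∧ AffineIndependent ℝ ![M, T.2.2, T.1] ∧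
    AffineIndependent ℝ ![M, T.1, T.2.1]

/-! Each circumcenter is pinned down by exhibiting a point equidistant from the three vertices:
three distinct concyclic points are never collinear, so the circumcenter is defined and equals
that point. Both image triangles have a real apex `a` and the other two vertices `w`, `conj w`,
so they are isosceles; the apex angle is read off its cosine, and the two base angles are
`(π - apex) / 2` by the angle sum. -/

open EuclideanGeometry Real ComplexConjugate Complex

lemma ccenter_eq_of_normSq_eq {A B C P : ℂ} (hAB : A ≠ B) (hAC : A ≠ C) (hBC : B ≠ C)
    (hB : normSq (B - P) = normSq (A - P)) (hC : normSq (C - P) = normSq (A - P)) :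
    ccenter A B C = P := by
  have hBP : dist B P = dist A P := by simp only [Complex.dist_eq, Complex.norm_def, hB]
  have hCP : dist C P = dist A P := by simp only [Complex.dist_eq, Complex.norm_def, hC]
  have hind : AffineIndependent ℝ ![A, B, C] :=
    Cospherical.affineIndependent_of_ne ⟨P, dist A P, by simp [hBP, hCP]⟩ hAB hAC hBC
  rw [ccenter, dif_pos hind]
  refine (Affine.Simplex.eq_circumcenter_of_dist_eq _ ?_ (r := dist A P) ?_).symm
  · rw [Affine.Simplex.span_eq_top _ Complex.finrank_real_complex]
    trivial
  · intro i
    fin_cases i <;> simp [hBP, hCP]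

section Isosceles

variable {V P : Type*} [NormedAddCommGroup V] [InnerProductSpace ℝ V] [MetricSpace P]
  [NormedAddTorsor V P]

lemma angle_eq_pi_sub_angle_div_two_of_dist_eq {p a b : P} (h : dist p a = dist p b)
    (ha : a ≠ p) : ∠ p a b = (π - ∠ a p b) / 2 := by
  have hsum := angle_add_angle_add_angle_eq_pi b ha
  rw [angle_comm a b p, ← angle_eq_angle_of_dist_eq h, angle_comm b p a] at hsum
  linarith

end Isosceles

lemma cos_angle_conj (a : ℝ) (w : ℂ) :
    Real.cos (∠ w a (conj w)) = ((w.re - a) ^ 2 - w.im ^ 2) / ((w.re - a) ^ 2 + w.im ^ 2) := by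
  have hconj : conj w - (a : ℂ) = conj (w - a) := by simp
  rw [EuclideanGeometry.angle, vsub_eq_sub, vsub_eq_sub, InnerProductGeometry.cos_angle, hconj,
    Complex.norm_conj, Complex.inner, ← sq, Complex.norm_mul_self_eq_normSq]
  simp [Complex.normSq_apply, sq]

lemma angles_of_conj_triangle (a : ℝ) {w : ℂ} (hw : w.im ≠ 0) {θ : ℝ}
    (hθ : θ ∈ Set.Icc 0 π)
    (hcos : (w.re - a) ^ 2 - w.im ^ 2 = Real.cos θ * ((w.re - a) ^ 2 + w.im ^ 2)) :
    ∠ w a (conj w) = θ ∧ ∠ (a : ℂ) w (conj w) = (π - θ) / 2 ∧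
      ∠ (a : ℂ) (conj w) w = (π - θ) / 2 := by
  have hapex : ∠ w a (conj w) = θ := by
    refine Real.injOn_cos ⟨angle_nonneg _ _ _, angle_le_pi _ _ _⟩ hθ ?_
    rw [cos_angle_conj, hcos, mul_div_cancel_right₀]
    positivity
  have hdist : dist (a : ℂ) w = dist (a : ℂ) (conj w) := by
    rw [← Complex.dist_conj_conj, Complex.conj_ofReal]
  have hw₁ : w ≠ a := fun h => hw (by simp [h])
  have hw₂ : conj w ≠ a := fun h => hw (by simpa using congrArg Complex.im h)
  refine ⟨hapex, ?_, ?_⟩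
  · rw [angle_eq_pi_sub_angle_div_two_of_dist_eq hdist hw₁, hapex]
  · rw [angle_eq_pi_sub_angle_div_two_of_dist_eq hdist.symm hw₂, angle_comm, hapex]

lemma tmap_equilateral :
    tmap (1 - (√3 : ℂ)) (1, (-1 + √3 * I) / 2, (-1 - √3 * I) / 2) =
      (1, (1 - (√3 : ℂ) / 2) + (3 / 2 - (√3 : ℂ)) * I,
        (1 - (√3 : ℂ) / 2) + ((√3 : ℂ) - 3 / 2) * I) := by
  have hs : √3 ^ 2 = 3 := Real.sq_sqrt (by norm_num)
  have hs0 : 0 < √3 := by positivity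
  simp only [tmap, Prod.mk.injEq]
  refine ⟨?_, ?_, ?_⟩ <;> apply ccenter_eq_of_normSq_eq <;>
    simp [Complex.ext_iff, Complex.normSq_apply] <;> intros <;> linarith

lemma tmap_tmap_equilateral :
    tmap (1 - (√3 : ℂ)) (1, (1 - (√3 : ℂ) / 2) + (3 / 2 - (√3 : ℂ)) * I,
        (1 - (√3 : ℂ) / 2) + ((√3 : ℂ) - 3 / 2) * I) =
      ((√3 : ℂ) - 2, (1 - (√3 : ℂ) / 2) - (3 / 2) * I,
        (1 - (√3 : ℂ) / 2) + (3 / 2) * I) := by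
  have hs : √3 ^ 2 = 3 := Real.sq_sqrt (by norm_num)
  have hs0 : 0 < √3 := by positivity
  simp only [tmap, Prod.mk.injEq]
  refine ⟨?_, ?_, ?_⟩ <;> apply ccenter_eq_of_normSq_eq <;>
    simp [Complex.ext_iff, Complex.normSq_apply] <;> intros <;> nlinarith

lemma angles_tmap_equilateral :
    ∠ ((1 - (√3 : ℂ) / 2) + (3 / 2 - (√3 : ℂ)) * I) 1
        ((1 - (√3 : ℂ) / 2) + ((√3 : ℂ) - 3 / 2) * I) = π / 6 ∧
      ∠ 1 ((1 - (√3 : ℂ) / 2) + (3 / 2 - (√3 : ℂ)) * I)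
        ((1 - (√3 : ℂ) / 2) + ((√3 : ℂ) - 3 / 2) * I) = 5 * π / 12 ∧
      ∠ 1 ((1 - (√3 : ℂ) / 2) + ((√3 : ℂ) - 3 / 2) * I)
        ((1 - (√3 : ℂ) / 2) + (3 / 2 - (√3 : ℂ)) * I) = 5 * π / 12 := by
  have hs : √3 ^ 2 = 3 := Real.sq_sqrt (by norm_num)
  have hconj : (1 - (√3 : ℂ) / 2) + ((√3 : ℂ) - 3 / 2) * I =
      conj ((1 - (√3 : ℂ) / 2) + (3 / 2 - (√3 : ℂ)) * I) := by
    simp only [map_add, map_sub, map_mul, map_div₀, map_one, map_ofNat, conj_ofReal, conj_I]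
    ring
  have h := angles_of_conj_triangle 1 (w := (1 - (√3 : ℂ) / 2) + (3 / 2 - (√3 : ℂ)) * I)
    (θ := π / 6) (by simp; nlinarith) ⟨by positivity, by linarith [pi_pos]⟩
    (by rw [cos_pi_div_six]; simp; nlinarith)
  rw [ofReal_one, ← hconj] at h
  rwa [show 5 * π / 12 = (π - π / 6) / 2 by ring]

lemma angles_tmap_tmap_equilateral :
    ∠ ((1 - (√3 : ℂ) / 2) - (3 / 2) * I) ((√3 : ℂ) - 2)
        ((1 - (√3 : ℂ) / 2) + (3 / 2) * I) = 5 * π / 6 ∧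
      ∠ ((√3 : ℂ) - 2) ((1 - (√3 : ℂ) / 2) - (3 / 2) * I)
        ((1 - (√3 : ℂ) / 2) + (3 / 2) * I) = π / 12 ∧
      ∠ ((√3 : ℂ) - 2) ((1 - (√3 : ℂ) / 2) + (3 / 2) * I)
        ((1 - (√3 : ℂ) / 2) - (3 / 2) * I) = π / 12 := by
  have hs : √3 ^ 2 = 3 := Real.sq_sqrt (by norm_num)
  have hconj :
      (1 - (√3 : ℂ) / 2) + (3 / 2) * I = conj ((1 - (√3 : ℂ) / 2) - (3 / 2) * I) := by
    simp only [map_sub, map_mul, map_div₀, map_one, map_ofNat, conj_ofReal, conj_I]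
    ring
  have h := angles_of_conj_triangle (√3 - 2) (w := (1 - (√3 : ℂ) / 2) - (3 / 2) * I)
    (θ := 5 * π / 6) (by simp) ⟨by positivity, by linarith [pi_pos]⟩
    (by
      rw [show 5 * π / 6 = π - π / 6 by ring, Real.cos_pi_sub, cos_pi_div_six]
      simp
      nlinarith)
  push_cast at h
  rw [← hconj] at h
  rwa [show π / 12 = (π - 5 * π / 6) / 2 by ring]

/-- With `M = 1 − √3`, the first and second images of the standard equilateral
triangle under the circumcenter map have the stated vertices and interior angles. -/
theorem equilateral_canonical_triangles_at_K2
    (A B C : ℂ) (hA : A = 1)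
    (hB : B = (-1 + Real.sqrt 3 * Complex.I) / 2)
    (hC : C = (-1 - Real.sqrt 3 * Complex.I) / 2)
    (M : ℂ) (hM : M = 1 - (Real.sqrt 3 : ℂ)) :
    let T1 := tmap M (A, B, C)
    let T2 := tmap M T1
    T1.1 = 1 ∧
    T1.2.1 = (1 - (Real.sqrt 3 : ℂ) / 2) + (3 / 2 - (Real.sqrt 3 : ℂ)) * Complex.I ∧
    T1.2.2 = (1 - (Real.sqrt 3 : ℂ) / 2) + ((Real.sqrt 3 : ℂ) - 3 / 2) * Complex.I ∧
    T2.1 = (Real.sqrt 3 : ℂ) - 2 ∧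
    T2.2.1 = (1 - (Real.sqrt 3 : ℂ) / 2) - (3 / 2) * Complex.I ∧
    T2.2.2 = (1 - (Real.sqrt 3 : ℂ) / 2) + (3 / 2) * Complex.I ∧
    EuclideanGeometry.angle T1.2.1 T1.1 T1.2.2 = Real.pi / 6 ∧
    EuclideanGeometry.angle T1.1 T1.2.1 T1.2.2 = 5 * Real.pi / 12 ∧
    EuclideanGeometry.angle T1.1 T1.2.2 T1.2.1 = 5 * Real.pi / 12 ∧
    EuclideanGeometry.angle T2.2.1 T2.1 T2.2.2 = 5 * Real.pi / 6 ∧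
    EuclideanGeometry.angle T2.1 T2.2.1 T2.2.2 = Real.pi / 12 ∧
    EuclideanGeometry.angle T2.1 T2.2.2 T2.2.1 = Real.pi / 12 := by
  subst hA hB hC hM
  obtain ⟨hA₁, hB₁, hC₁⟩ := angles_tmap_equilateral
  obtain ⟨hA₂, hB₂, hC₂⟩ := angles_tmap_tmap_equilateral
  simp only [tmap_equilateral, tmap_tmap_equilateral, true_and]
  exact ⟨hA₁, hB₁, hC₁, hA₂, hB₂, hC₂⟩
end

section
/- The third pedal triangle is similar to the original triangle via a spiral similarity centered at the pedal point: let (A,B,C) be a triangle in ℂ and M a point; define the pedal operation sending a triangle (X,Y,Z) to (foot of the perpendicular from M to line XY, foot from M to line YZ, foot from M to line ZX). Suppose the original triangle and its first and second pedal triangles with respect to M each have non-collinear (in particular pairwise distinct) vertices. Then the third pedal triangle (A₃,B₃,C₃) of (A,B,C) with respect to M satisfies: there exists σ ∈ ℂ, σ ≠ 0, with A₃ − M = σ*(A − M), B₃ − M = σ*(B − M), C₃ − M = σ*(C − M). -/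
/-!
Put the pedal point at the origin. The foot `p` of the perpendicular from `0` to a line through
`b` sees `[0, b]` at a right angle, so it lies on the circle with diameter `[0, b]`; and for two
points `p ≠ q` of that circle the foot from `0` to the line `pq` is `p q / b`. If `(p, q, r)` is the
first pedal triangle of `(a, b, c)`, then `p` and `q` are feet on the two sides through `b`, so the
second pedal triangle is `(p q / b, q r / c, r p / a)`. Applying the same rule to `(p, q, r)`,
the third pedal triangle is `(p q r / (a b c)) • (a, b, c)`.
-/

/-- The pedal operation with respect to `M`: a triangle `(X,Y,Z)` is sent to the
triangle of feet of the perpendiculars from `M` to the lines `XY`, `YZ`, `ZX`. -/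
noncomputable def pedal (M : ℂ) (T : ℂ × ℂ × ℂ) : ℂ × ℂ × ℂ :=
  ((EuclideanGeometry.orthogonalProjection (affineSpan ℝ {T.1, T.2.1}) M : ℂ),
   (EuclideanGeometry.orthogonalProjection (affineSpan ℝ {T.2.1, T.2.2}) M : ℂ),
   (EuclideanGeometry.orthogonalProjection (affineSpan ℝ {T.2.2, T.1}) M : ℂ))

open ComplexConjugate EuclideanGeometry

namespace Complex

theorem inner_eq_zero_iff_mul_conj_add_conj_mul (w z : ℂ) :
    inner ℝ w z = 0 ↔ z * conj w + conj z * w = 0 := by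
  have h := add_conj (z * conj w)
  rw [map_mul, conj_conj] at h
  rw [Complex.inner, h, ofReal_eq_zero, mul_eq_zero]
  norm_num

theorem conj_sub_conj_ne_zero {x y : ℂ} (h : x ≠ y) : conj y - conj x ≠ 0 :=
  sub_ne_zero.mpr ((starRingEnd ℂ).injective.ne h.symm)

end Complex

open Complex

/-- The foot of the perpendicular from `0` to the line `xy`; the formula degenerates to `0`
(not `x`) when `x = y`. -/
noncomputable def originFoot (x y : ℂ) : ℂ :=
  (x * conj y - conj x * y) / (2 * (conj y - conj x))

theorem originFoot_comm (x y : ℂ) : originFoot x y = originFoot y x := by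
  rw [originFoot, originFoot, ← neg_div_neg_eq]
  congr 1 <;> ring

@[simp]
theorem originFoot_zero_left (y : ℂ) : originFoot 0 y = 0 := by
  simp [originFoot]

@[simp]
theorem originFoot_zero_right (x : ℂ) : originFoot x 0 = 0 := by
  simp [originFoot]

theorem inner_originFoot_sub_originFoot (x y : ℂ) :
    inner ℝ (originFoot x y) (x - originFoot x y) = 0 := by
  rcases eq_or_ne x y with rfl | hxy
  · simp [originFoot]
  have hs : conj y - conj x ≠ 0 := conj_sub_conj_ne_zero hxy
  rw [inner_eq_zero_iff_mul_conj_add_conj_mul, originFoot]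
  simp only [map_sub, map_mul, map_div₀, map_ofNat, conj_conj]
  field_simp
  ring

theorem originFoot_eq_mul_div {p q b : ℂ} (hpq : p ≠ q) (hp : inner ℝ p (b - p) = 0)
    (hq : inner ℝ q (b - q) = 0) : originFoot p q = p * q / b := by
  have hb : b ≠ 0 := by
    rintro rfl
    simp only [zero_sub, inner_neg_right, neg_eq_zero, inner_self_eq_zero] at hp hq
    exact hpq (hp.trans hq.symm)
  rw [inner_eq_zero_iff_mul_conj_add_conj_mul, map_sub] at hp hq
  rw [originFoot, div_eq_div_iff (mul_ne_zero two_ne_zero (conj_sub_conj_ne_zero hpq)) hb]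
  linear_combination p * hq - q * hp

theorem coe_orthogonalProjection_affineSpan_pair {X Y : ℂ} (hXY : X ≠ Y) (M : ℂ) :
    (orthogonalProjection (affineSpan ℝ {X, Y}) M : ℂ) = M + originFoot (X - M) (Y - M) := by
  obtain ⟨x, rfl⟩ : ∃ x, X = M + x := ⟨X - M, by ring⟩
  obtain ⟨y, rfl⟩ : ∃ y, Y = M + y := ⟨Y - M, by ring⟩
  have hxy : x ≠ y := fun h => hXY (by rw [h])
  rw [add_sub_cancel_left, add_sub_cancel_left]
  have hs : conj y - conj x ≠ 0 := conj_sub_conj_ne_zero hxy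
  rw [coe_orthogonalProjection_eq_iff_mem, direction_affineSpan, vectorSpan_pair]
  constructor
  · set t : ℝ := -(x * conj (y - x)).re / normSq (y - x)
    have ht : (t : ℂ) =
        -(x * (conj y - conj x) + conj x * (y - x)) / (2 * ((y - x) * (conj y - conj x))) := by
      push_cast [t]
      rw [re_eq_add_conj, ← mul_conj]
      simp only [map_mul, map_sub, conj_conj]
      field_simp
    convert AffineMap.lineMap_mem_affineSpan_pair t (M + x) (M + y) using 1
    rw [AffineMap.lineMap_apply, vsub_eq_sub, vadd_eq_add, real_smul, ht, originFoot]
    field_simp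
    ring
  · rw [Submodule.mem_orthogonal_singleton_iff_inner_right, vsub_eq_sub, vsub_eq_sub,
      add_sub_add_left_eq_sub, sub_add_cancel_left, inner_eq_zero_iff_mul_conj_add_conj_mul,
      originFoot]
    simp only [map_neg, map_sub, map_mul, map_div₀, map_ofNat, conj_conj]
    field_simp
    ring

theorem originFoot_originFoot {x y z : ℂ} (h : originFoot x y ≠ originFoot y z) :
    originFoot (originFoot x y) (originFoot y z) = originFoot x y * originFoot y z / y :=
  originFoot_eq_mul_div h (by rw [originFoot_comm]; exact inner_originFoot_sub_originFoot y x)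
    (inner_originFoot_sub_originFoot y z)

def PairwiseDistinct {α : Type*} (T : α × α × α) : Prop :=
  T.1 ≠ T.2.1 ∧ T.2.1 ≠ T.2.2 ∧ T.2.2 ≠ T.1

theorem PairwiseDistinct.of_affineIndependent {k V P : Type*} [Ring k] [Nontrivial k]
    [AddCommGroup V] [Module k V] [AddTorsor V P] {x y z : P} (h : AffineIndependent k ![x, y, z]) :
    PairwiseDistinct (x, y, z) :=
  ⟨h.injective.ne (by decide : (0 : Fin 3) ≠ 1), h.injective.ne (by decide : (1 : Fin 3) ≠ 2),
    h.injective.ne (by decide : (2 : Fin 3) ≠ 0)⟩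

theorem pairwiseDistinct_add_const_iff {α : Type*} [AddGroup α] (T : α × α × α) (M : α) :
    PairwiseDistinct (T + (M, M, M)) ↔ PairwiseDistinct T := by
  simp [PairwiseDistinct]

noncomputable def originPedal (T : ℂ × ℂ × ℂ) : ℂ × ℂ × ℂ :=
  (originFoot T.1 T.2.1, originFoot T.2.1 T.2.2, originFoot T.2.2 T.1)

theorem pedal_eq_originPedal {T : ℂ × ℂ × ℂ} (h : PairwiseDistinct T) (M : ℂ) :
    pedal M T = originPedal (T - (M, M, M)) + (M, M, M) := by
  obtain ⟨hXY, hYZ, hZX⟩ := h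
  simp only [pedal, originPedal, coe_orthogonalProjection_affineSpan_pair hXY,
    coe_orthogonalProjection_affineSpan_pair hYZ, coe_orthogonalProjection_affineSpan_pair hZX,
    Prod.fst_sub, Prod.snd_sub, Prod.mk_add_mk, add_comm M]

theorem iterate_pedal_eq (M : ℂ) (T : ℂ × ℂ × ℂ) (n : ℕ)
    (h : ∀ k < n, PairwiseDistinct ((pedal M)^[k] T)) :
    (pedal M)^[n] T = originPedal^[n] (T - (M, M, M)) + (M, M, M) := by
  induction n with
  | zero => simp
  | succ n ih =>
    have ih := ih fun k hk => h k (by omega)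
    rw [Function.iterate_succ_apply', Function.iterate_succ_apply', ih,
      pedal_eq_originPedal (ih ▸ h n (by omega)), add_sub_cancel_right]

theorem ne_zero_of_pairwiseDistinct_originPedal {a b c : ℂ}
    (h : PairwiseDistinct (originPedal (a, b, c))) : a ≠ 0 ∧ b ≠ 0 ∧ c ≠ 0 := by
  refine ⟨?_, ?_, ?_⟩ <;> rintro rfl <;> simp [PairwiseDistinct, originPedal] at h

theorem originPedal_originPedal {a b c p q r : ℂ} (hP : originPedal (a, b, c) = (p, q, r))
    (h : PairwiseDistinct (p, q, r)) :
    originPedal (p, q, r) = (p * q / b, q * r / c, r * p / a) := by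
  simp only [originPedal, Prod.mk.injEq] at hP ⊢
  obtain ⟨rfl, rfl, rfl⟩ := hP
  exact ⟨originFoot_originFoot h.1, originFoot_originFoot h.2.1, originFoot_originFoot h.2.2⟩

theorem exists_iterate_originPedal_three_eq_smul (T : ℂ × ℂ × ℂ)
    (h₁ : PairwiseDistinct (originPedal T)) (h₂ : PairwiseDistinct (originPedal^[2] T)) :
    ∃ σ : ℂ, σ ≠ 0 ∧ originPedal^[3] T = σ • T := by
  obtain ⟨a, b, c⟩ := T
  rcases hP : originPedal (a, b, c) with ⟨p, q, r⟩
  obtain ⟨ha, hb, hc⟩ := ne_zero_of_pairwiseDistinct_originPedal h₁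
  rw [hP] at h₁
  simp only [Function.iterate_succ_apply', Function.iterate_zero_apply, hP] at h₂ ⊢
  obtain ⟨hp, hq, hr⟩ := ne_zero_of_pairwiseDistinct_originPedal h₂
  rw [originPedal_originPedal hP h₁] at h₂ ⊢
  rw [originPedal_originPedal (originPedal_originPedal hP h₁) h₂]
  refine ⟨p * q * r / (a * b * c), by simp [ha, hb, hc, hp, hq, hr], ?_⟩
  simp only [Prod.smul_mk, smul_eq_mul, Prod.mk.injEq]
  refine ⟨?_, ?_, ?_⟩ <;> field_simp

/-- The third pedal triangle of a triangle `(A,B,C)` with respect to `M` is the image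
of `(A,B,C)` under a spiral similarity centered at `M`, provided the original triangle
and its first and second pedal triangles are non-degenerate. -/
theorem third_pedal_triangle_similar
    (A B C M : ℂ)
    (hdef : ∀ k < 3,
      AffineIndependent ℝ
        ![((pedal M)^[k] (A, B, C)).1, ((pedal M)^[k] (A, B, C)).2.1,
          ((pedal M)^[k] (A, B, C)).2.2]) :
    ∃ σ : ℂ, σ ≠ 0 ∧
      ((pedal M)^[3] (A, B, C)).1 - M = σ * (A - M) ∧
      ((pedal M)^[3] (A, B, C)).2.1 - M = σ * (B - M) ∧
      ((pedal M)^[3] (A, B, C)).2.2 - M = σ * (C - M) := by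
  have hdist : ∀ k < 3, PairwiseDistinct ((pedal M)^[k] (A, B, C)) :=
    fun k hk => PairwiseDistinct.of_affineIndependent (hdef k hk)
  have horigin : ∀ k < 3, PairwiseDistinct (originPedal^[k] ((A, B, C) - (M, M, M))) := by
    intro k hk
    simpa [iterate_pedal_eq M _ k fun j hj => hdist j (by omega), pairwiseDistinct_add_const_iff]
      using hdist k hk
  obtain ⟨σ, hσ, hσT⟩ :=
    exists_iterate_originPedal_three_eq_smul _ (horigin 1 (by norm_num)) (horigin 2 (by norm_num))
  refine ⟨σ, hσ, ?_⟩
  rw [iterate_pedal_eq M _ 3 hdist, hσT]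
  simp
end
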